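/- arXiv:1108.0293 — 2 statements merged into one kernel-verified Lean document; each statement's English description precedes it below -/
import Mathlib

section
/- For every integer a and all signs ε₁, ε₂ ∈ {1, −1}, the group Π(a, 1, ε₁, ε₂) is isomorphic to Π(a, 1, ε₂, ε₁). -/
/-- The relator set of the presentation
`⟨s₁, s₂, s₃ ∣ s₁s₂s₁⁻¹ = s₃^a s₂^ε, s₁s₃s₁⁻¹ = s₃^{ε₁}, s₂s₃s₂⁻¹ = s₃^{ε₂}⟩`. -/
def PiRels (a ε ε₁ ε₂ : ℤ) : Set (FreeGroup (Fin 3)) :=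
  { FreeGroup.of 0 * FreeGroup.of 1 * (FreeGroup.of 0)⁻¹ * FreeGroup.of 1 ^ (-ε) *
      FreeGroup.of 2 ^ (-a),
    FreeGroup.of 0 * FreeGroup.of 2 * (FreeGroup.of 0)⁻¹ * FreeGroup.of 2 ^ (-ε₁),
    FreeGroup.of 1 * FreeGroup.of 2 * (FreeGroup.of 1)⁻¹ * FreeGroup.of 2 ^ (-ε₂) }

/-- The group `Π(a, ε, ε₁, ε₂)` with presentation
`⟨s₁, s₂, s₃ ∣ s₁s₂s₁⁻¹ = s₃^a s₂^ε, s₁s₃s₁⁻¹ = s₃^{ε₁}, s₂s₃s₂⁻¹ = s₃^{ε₂}⟩`. -/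
abbrev PiGroup (a ε ε₁ ε₂ : ℤ) : Type := PresentedGroup (PiRels a ε ε₁ ε₂)

/-!
With `ε = 1` the first relation says that the commutator `[s₁, s₂]` equals `s₃ ^ a`, so swapping
`s₁ ↔ s₂` and inverting `s₃` turns it into `[s₂, s₁] = (s₃⁻¹) ^ a`, while the two conjugation
relations for `s₃` trade places. This substitution is therefore a homomorphism
`Π(a, 1, ε₁, ε₂) → Π(a, 1, ε₂, ε₁)`, and doing it twice is the identity.
-/

namespace PiGroup

variable {G : Type*} [Group G]

def SatisfiesRels (a ε ε₁ ε₂ : ℤ) (x y z : G) : Prop :=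
  x * y * x⁻¹ = z ^ a * y ^ ε ∧ x * z * x⁻¹ = z ^ ε₁ ∧ y * z * y⁻¹ = z ^ ε₂

theorem satisfiesRels_iff_lift_eq_one {a ε ε₁ ε₂ : ℤ} {f : Fin 3 → G} :
    SatisfiesRels a ε ε₁ ε₂ (f 0) (f 1) (f 2) ↔
      ∀ r ∈ PiRels a ε ε₁ ε₂, FreeGroup.lift f r = 1 := by
  simp only [PiRels, Set.mem_insert_iff, Set.mem_singleton_iff, forall_eq_or_imp, forall_eq,
    map_mul, map_inv, map_zpow, FreeGroup.lift_apply_of, SatisfiesRels, zpow_neg,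
    mul_inv_eq_iff_eq_mul, one_mul]

theorem satisfiesRels_of (a ε ε₁ ε₂ : ℤ) :
    SatisfiesRels a ε ε₁ ε₂ (.of 0 : PiGroup a ε ε₁ ε₂) (.of 1) (.of 2) := by
  refine satisfiesRels_iff_lift_eq_one.mpr fun r hr => ?_
  have hmk : FreeGroup.lift (PresentedGroup.of (rels := PiRels a ε ε₁ ε₂)) =
      PresentedGroup.mk _ := by
    ext; rfl
  rw [hmk]
  exact PresentedGroup.one_of_mem hr

theorem SatisfiesRels.swap {a ε₁ ε₂ : ℤ} {x y z : G} (h : SatisfiesRels a 1 ε₁ ε₂ x y z) :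
    SatisfiesRels a 1 ε₂ ε₁ y x z⁻¹ := by
  obtain ⟨hxy, hxz, hyz⟩ := h
  refine ⟨?_, ?_, ?_⟩
  · have hcomm : z ^ a = x * y * x⁻¹ * y⁻¹ := by rw [hxy]; group
    rw [inv_zpow, hcomm]; group
  · rw [inv_zpow, ← hyz]; group
  · rw [inv_zpow, ← hxz]; group

def lift {a ε ε₁ ε₂ : ℤ} {x y z : G} (h : SatisfiesRels a ε ε₁ ε₂ x y z) :
    PiGroup a ε ε₁ ε₂ →* G :=
  PresentedGroup.toGroup (f := ![x, y, z]) (satisfiesRels_iff_lift_eq_one.mp h)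

theorem lift_of {a ε ε₁ ε₂ : ℤ} {x y z : G} (h : SatisfiesRels a ε ε₁ ε₂ x y z) (i : Fin 3) :
    lift h (.of i) = ![x, y, z] i :=
  PresentedGroup.toGroup.of _

def swapHom (a ε₁ ε₂ : ℤ) : PiGroup a 1 ε₁ ε₂ →* PiGroup a 1 ε₂ ε₁ :=
  lift (satisfiesRels_of a 1 ε₂ ε₁).swap

theorem swapHom_comp_swapHom (a ε₁ ε₂ : ℤ) :
    (swapHom a ε₂ ε₁).comp (swapHom a ε₁ ε₂) = MonoidHom.id _ := by
  refine PresentedGroup.ext fun i => ?_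
  fin_cases i <;> simp [swapHom, lift_of]

def swapEquiv (a ε₁ ε₂ : ℤ) : PiGroup a 1 ε₁ ε₂ ≃* PiGroup a 1 ε₂ ε₁ :=
  (swapHom a ε₁ ε₂).toMulEquiv (swapHom a ε₂ ε₁) (swapHom_comp_swapHom a ε₁ ε₂)
    (swapHom_comp_swapHom a ε₂ ε₁)

end PiGroup

theorem PiGroup_iso_swap_general (a ε₁ ε₂ : ℤ) :
    Nonempty (PiGroup a 1 ε₁ ε₂ ≃* PiGroup a 1 ε₂ ε₁) :=
  ⟨PiGroup.swapEquiv a ε₁ ε₂⟩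

/-- `Π(a, 1, ε₁, ε₂) ≅ Π(a, 1, ε₂, ε₁)`. -/
theorem PiGroup_iso_swap (a ε₁ ε₂ : ℤ)
    (hε₁ : ε₁ = 1 ∨ ε₁ = -1) (hε₂ : ε₂ = 1 ∨ ε₂ = -1) :
    Nonempty (PiGroup a 1 ε₁ ε₂ ≃* PiGroup a 1 ε₂ ε₁) :=
  PiGroup_iso_swap_general a ε₁ ε₂
end

section
/- Let G be a group and let s_k, s_i, s_j, s_n ∈ G with ε_{ki}, ε_{kj}, ε_{ij}, ε_i, ε_j ∈ {1, −1} and a_{ki}, a_{kj} ∈ ℤ satisfying: s_k s_i s_k⁻¹ = s_n^{a_{ki}} s_i^{ε_{ki}}, s_k s_j s_k⁻¹ = s_n^{a_{kj}} s_j^{ε_{kj}}, s_i s_j s_i⁻¹ = s_j^{ε_{ij}}, s_i s_n s_i⁻¹ = s_n^{ε_i}, s_j s_n s_j⁻¹ = s_n^{ε_j}, and suppose s_n has infinite order. Then: (1) if ε_i = ε_j = −1, then a_{ki} = a_{kj}; (2) if ε_i = 1 and a_{ki} ≠ 0, then ε_j = 1, and moreover for any further element s_ℓ ∈ G with ε_{kℓ},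 ε_{ℓi}, ε_ℓ ∈ {1, −1} and a_{kℓ} ∈ ℤ satisfying s_k s_ℓ s_k⁻¹ = s_n^{a_{kℓ}} s_ℓ^{ε_{kℓ}}, s_ℓ s_i s_ℓ⁻¹ = s_i^{ε_{ℓi}} and s_ℓ s_n s_ℓ⁻¹ = s_n^{ε_ℓ}, one has ε_{ℓi} = ε_ℓ. -/
lemma conj_zpow' {G : Type*} [Group G] (x y : G) (m : ℤ) :
    x * y ^ m * x⁻¹ = (x * y * x⁻¹) ^ m := by
  have := map_zpow (MulAut.conj x) y m
  simpa [MulAut.conj_apply, mul_assoc] using this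

/-- conjugation by a ±1 power -/
lemma conj_sign {G : Type*} [Group G] (x y : G) (ε : ℤ) (hε : ε = 1 ∨ ε = -1)
    (h : x * y * x⁻¹ = y ^ ε) (s m : ℤ) (hs : s = 1 ∨ s = -1) :
    x ^ s * y ^ m * (x ^ s)⁻¹ = y ^ (ε * m) := by
  have base : ∀ m : ℤ, x * y ^ m * x⁻¹ = y ^ (ε * m) := by
    intro m; rw [conj_zpow' x y m, h, ← zpow_mul]
  rcases hs with rfl | rfl
  · simpa using base m
  · have εε : ε * ε = 1 := by rcases hε with rfl | rfl <;> norm_num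
    have h2 : x * y ^ (ε * m) * x⁻¹ = y ^ m := by
      rw [base (ε * m), show ε * (ε * m) = (ε * ε) * m by ring, εε, one_mul]
    have : y ^ (ε * m) = x⁻¹ * y ^ m * x := by rw [← h2]; group
    simpa [zpow_neg] using this.symm

lemma swap_sign {G : Type*} [Group G] (x y : G) (ε : ℤ) (hε : ε = 1 ∨ ε = -1)
    (h : x * y * x⁻¹ = y ^ ε) (s m : ℤ) (hs : s = 1 ∨ s = -1) :
    x ^ s * y ^ m = y ^ (ε * m) * x ^ s := by
  have hc := conj_sign x y ε hε h s m hs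
  have h2 : (x ^ s * y ^ m * (x ^ s)⁻¹) * x ^ s = y ^ (ε * m) * x ^ s := by rw [hc]
  simpa [mul_assoc] using h2

/-- the key arithmetic identity extracted from conjugating `h3` by `sk` -/
lemma key_eq {G : Type*} [Group G] (sk si sj sn : G)
    (εki εkj εij εi εj aki akj : ℤ)
    (hεki : εki = 1 ∨ εki = -1) (hεkj : εkj = 1 ∨ εkj = -1)
    (hεij : εij = 1 ∨ εij = -1) (hεi : εi = 1 ∨ εi = -1) (hεj : εj = 1 ∨ εj = -1)
    (h1 : sk * si * sk⁻¹ = sn ^ aki * si ^ εki)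
    (h2 : sk * sj * sk⁻¹ = sn ^ akj * sj ^ εkj)
    (h3 : si * sj * si⁻¹ = sj ^ εij)
    (h4 : si * sn * si⁻¹ = sn ^ εi)
    (h5 : sj * sn * sj⁻¹ = sn ^ εj)
    (hsn : ¬ IsOfFinOrder sn) :
    aki + εi * akj - εj * aki = (if εij = 1 then akj else -(εj * akj)) := by
  have hinj : Function.Injective fun n : ℤ => sn ^ n :=
    (injective_zpow_iff_not_isOfFinOrder).2 hsn
  have hq : εij * εkj = 1 ∨ εij * εkj = -1 := by
    rcases hεij with rfl | rfl <;> rcases hεkj with rfl | rfl <;> norm_num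
  have e1 : si ^ εki * sn ^ akj = sn ^ (εi * akj) * si ^ εki :=
    swap_sign si sn εi hεi h4 εki akj hεki
  have e2 : si ^ εki * sj ^ εkj * (si ^ εki)⁻¹ = sj ^ (εij * εkj) :=
    conj_sign si sj εij hεij h3 εki εkj hεki
  have e3 : sj ^ (εij * εkj) * sn ^ (-aki) = sn ^ (εj * -aki) * sj ^ (εij * εkj) :=
    swap_sign sj sn εj hεj h5 (εij * εkj) (-aki) hq
  have L : (sn ^ aki * si ^ εki) * (sn ^ akj * sj ^ εkj) * (sn ^ aki * si ^ εki)⁻¹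
      = (sn ^ akj * sj ^ εkj) ^ εij := by
    rw [← h1, ← h2]
    calc (sk * si * sk⁻¹) * (sk * sj * sk⁻¹) * (sk * si * sk⁻¹)⁻¹
        = sk * (si * sj * si⁻¹) * sk⁻¹ := by group
      _ = sk * sj ^ εij * sk⁻¹ := by rw [h3]
      _ = (sk * sj * sk⁻¹) ^ εij := conj_zpow' sk sj εij
  have key : sn ^ (aki + εi * akj - εj * aki) * sj ^ (εij * εkj)
      = (sn ^ akj * sj ^ εkj) ^ εij := by
    rw [← L]
    symm
    calc sn ^ aki * si ^ εki * (sn ^ akj * sj ^ εkj) * (sn ^ aki * si ^ εki)⁻¹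
        = sn ^ aki * ((si ^ εki * sn ^ akj) * sj ^ εkj * (si ^ εki)⁻¹) * sn ^ (-aki) := by
          group
      _ = sn ^ aki * ((sn ^ (εi * akj) * si ^ εki) * sj ^ εkj * (si ^ εki)⁻¹) * sn ^ (-aki) := by
          rw [e1]
      _ = sn ^ aki * sn ^ (εi * akj) * (si ^ εki * sj ^ εkj * (si ^ εki)⁻¹) * sn ^ (-aki) := by
          group
      _ = sn ^ aki * sn ^ (εi * akj) * (sj ^ (εij * εkj) * sn ^ (-aki)) := by
          rw [e2]; group
      _ = sn ^ aki * sn ^ (εi * akj) * (sn ^ (εj * -aki) * sj ^ (εij * εkj)) := by rw [e3]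
      _ = sn ^ (aki + εi * akj + εj * -aki) * sj ^ (εij * εkj) := by group
      _ = sn ^ (aki + εi * akj - εj * aki) * sj ^ (εij * εkj) := by
          rw [show aki + εi * akj + εj * -aki = aki + εi * akj - εj * aki by ring]
  rcases hεij with rfl | rfl
  · simp only [if_pos rfl]
    have hkey : sn ^ (aki + εi * akj - εj * aki) * sj ^ ((1:ℤ) * εkj)
        = sn ^ akj * sj ^ εkj := by simpa using key
    rw [one_mul] at hkey
    have := mul_right_cancel hkey
    exact hinj this
  · simp only [if_neg (by norm_num : ¬ (-1 : ℤ) = 1)]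
    have rhs : (sn ^ akj * sj ^ εkj) ^ (-1 : ℤ)
        = sn ^ (εj * -akj) * sj ^ ((-1 : ℤ) * εkj) := by
      have hs : -εkj = 1 ∨ -εkj = -1 := by rcases hεkj with rfl | rfl <;> norm_num
      have := swap_sign sj sn εj hεj h5 (-εkj) (-akj) hs
      calc (sn ^ akj * sj ^ εkj) ^ (-1 : ℤ)
          = sj ^ (-εkj) * sn ^ (-akj) := by group
        _ = sn ^ (εj * -akj) * sj ^ (-εkj) := this
        _ = sn ^ (εj * -akj) * sj ^ ((-1 : ℤ) * εkj) := by rw [neg_one_mul, zpow_neg]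
    rw [rhs] at key
    have := mul_right_cancel key
    have h' := hinj this
    rw [h']; ring

/-- Lemma 4.3 of the paper: under the relations
`s_k s_i s_k⁻¹ = s_n^{a_{ki}} s_i^{ε_{ki}}`, `s_k s_j s_k⁻¹ = s_n^{a_{kj}} s_j^{ε_{kj}}`,
`s_i s_j s_i⁻¹ = s_j^{ε_{ij}}`, `s_i s_n s_i⁻¹ = s_n^{ε_i}`, `s_j s_n s_j⁻¹ = s_n^{ε_j}`,
with all signs in `{1, −1}` and `s_n` of infinite order:
(1) if `ε_i = ε_j = −1` then `a_{ki} = a_{kj}`;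
(2) if `ε_i = 1` and `a_{ki} ≠ 0`, then `ε_j = 1`, and for any `s_ℓ` satisfying
`s_k s_ℓ s_k⁻¹ = s_n^{a_{kℓ}} s_ℓ^{ε_{kℓ}}`, `s_ℓ s_i s_ℓ⁻¹ = s_i^{ε_{ℓi}}` and
`s_ℓ s_n s_ℓ⁻¹ = s_n^{ε_ℓ}` one has `ε_{ℓi} = ε_ℓ`. -/
theorem exponents_structure (G : Type*) [Group G] (sk si sj sn : G)
    (εki εkj εij εi εj aki akj : ℤ)
    (hεki : εki = 1 ∨ εki = -1) (hεkj : εkj = 1 ∨ εkj = -1)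
    (hεij : εij = 1 ∨ εij = -1) (hεi : εi = 1 ∨ εi = -1) (hεj : εj = 1 ∨ εj = -1)
    (h1 : sk * si * sk⁻¹ = sn ^ aki * si ^ εki)
    (h2 : sk * sj * sk⁻¹ = sn ^ akj * sj ^ εkj)
    (h3 : si * sj * si⁻¹ = sj ^ εij)
    (h4 : si * sn * si⁻¹ = sn ^ εi)
    (h5 : sj * sn * sj⁻¹ = sn ^ εj)
    (hsn : ¬ IsOfFinOrder sn) :
    (εi = -1 → εj = -1 → aki = akj) ∧
    (εi = 1 → aki ≠ 0 → εj = 1 ∧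
      ∀ (sl : G) (εkl εli εl akl : ℤ),
        (εkl = 1 ∨ εkl = -1) → (εli = 1 ∨ εli = -1) → (εl = 1 ∨ εl = -1) →
        sk * sl * sk⁻¹ = sn ^ akl * sl ^ εkl →
        sl * si * sl⁻¹ = si ^ εli →
        sl * sn * sl⁻¹ = sn ^ εl →
        εli = εl) := by
  have main := key_eq sk si sj sn εki εkj εij εi εj aki akj
    hεki hεkj hεij hεi hεj h1 h2 h3 h4 h5 hsn
  constructor
  · rintro rfl rfl
    rcases hεij with rfl | rfl <;> simp at main <;> omega
  · rintro rfl haki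
    have hεj1 : εj = 1 := by
      rcases hεj with h | h
      · exact h
      · subst h
        rcases hεij with rfl | rfl <;> simp at main <;> omega
    refine ⟨hεj1, ?_⟩
    intro sl εkl εli εl akl hεkl hεli hεl g1 g2 g3
    have main2 := key_eq sk sl si sn εkl εki εli εl (1 : ℤ) akl aki
      hεkl hεki hεli hεl (Or.inl rfl) g1 h1 g2 g3 h4 hsn
    rcases hεli with rfl | rfl <;> rcases hεl with rfl | rfl <;> simp at main2 <;> omega
end
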